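/- arXiv:1303.4450 — 4 statements merged into one kernel-verified Lean document; each statement's English description precedes it below -/
import Mathlib

section
/- Let n be a 2-step nilpotent metric Lie algebra with non-degenerate center z and v = z^⊥. If {a_1,...,a_p} is an orthonormal basis of z with ε_k = ⟨a_k,a_k⟩ = ±1, then the Ricci operator restricted to v equals (1/2)∑_{k=1}^p ε_k j(a_k)². -/
open Module Finset

section Aux
variable {n : Type*} [AddCommGroup n] [Module ℝ n] {ι : Type*} [Fintype ι]

lemma repr_orthogonal (B : LinearMap.BilinForm ℝ n) (e : Basis ι ℝ n)
    (horth : ∀ i j, i ≠ j → B (e i) (e j) = 0)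
    (hne : ∀ i, B (e i) (e i) ≠ 0) (y : n) (i : ι) :
    e.repr y i = (B (e i) (e i))⁻¹ * B y (e i) := by
  classical
  have hy : B y (e i) = e.repr y i * B (e i) (e i) := by
    conv_lhs => rw [← e.sum_repr y]
    rw [map_sum, LinearMap.sum_apply]
    rw [Finset.sum_eq_single i]
    · simp
    · intro j _ hj
      simp [horth j i hj]
    · simp
  rw [hy]
  field_simp [hne i]

lemma trace_orthogonal (B : LinearMap.BilinForm ℝ n) (e : Basis ι ℝ n)
    (horth : ∀ i j, i ≠ j → B (e i) (e j) = 0)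
    (hne : ∀ i, B (e i) (e i) ≠ 0) (f : Module.End ℝ n) :
    LinearMap.trace ℝ n f = ∑ i, (B (e i) (e i))⁻¹ * B (f (e i)) (e i) := by
  classical
  rw [LinearMap.trace_eq_matrix_trace ℝ e, Matrix.trace]
  apply Finset.sum_congr rfl
  intro i _
  rw [Matrix.diag_apply, LinearMap.toMatrix_apply, repr_orthogonal B e horth hne]

lemma expand_orthogonal (B : LinearMap.BilinForm ℝ n) (c : ι → n)
    (horth : ∀ i j, i ≠ j → B (c i) (c j) = 0)
    (hne : ∀ i, B (c i) (c i) ≠ 0)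
    (u u' : n) (hu' : u' ∈ Submodule.span ℝ (Set.range c)) :
    B u u' = ∑ i, (B (c i) (c i))⁻¹ * (B u (c i) * B u' (c i)) := by
  classical
  rw [Submodule.mem_span_range_iff_exists_fun] at hu'
  obtain ⟨t, rfl⟩ := hu'
  have hcoord : ∀ i, B (∑ k, t k • c k) (c i) = t i * B (c i) (c i) := by
    intro i
    rw [map_sum, LinearMap.sum_apply, Finset.sum_eq_single i]
    · simp
    · intro j _ hj; simp [horth j i hj]
    · simp
  calc B u (∑ k, t k • c k) = ∑ i, t i * B u (c i) := by
        rw [map_sum]; simp [mul_comm]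
    _ = _ := by
        apply Finset.sum_congr rfl
        intro i _
        rw [hcoord i]
        field_simp [hne i]

end Aux

/-- The curvature operator `ξ ↦ R(ξ,u)w = ∇_ξ ∇_u w - ∇_u ∇_ξ w - ∇_{⁅ξ,u⁆} w`
as a linear map, for a bilinear connection `D`. -/
noncomputable def curvOp {n : Type*} [LieRing n] [LieAlgebra ℝ n]
    (D : n →ₗ[ℝ] n →ₗ[ℝ] n) (u w : n) : n →ₗ[ℝ] n where
  toFun ξ := D ξ (D u w) - D u (D ξ w) - D ⁅ξ, u⁆ w
  map_add' x y := by
    simp only [map_add, LinearMap.add_apply, add_lie]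
    abel
  map_smul' c x := by
    simp only [map_smul, LinearMap.smul_apply, smul_lie, RingHom.id_apply,
      smul_sub]
  
/-- The Ricci form `Ric(u,w) = trace (ξ ↦ R(ξ,u)w)`. -/
noncomputable def ricci {n : Type*} [LieRing n] [LieAlgebra ℝ n]
    (D : n →ₗ[ℝ] n →ₗ[ℝ] n) (u w : n) : ℝ :=
  LinearMap.trace ℝ n (curvOp D u w)

/-- If `{a_1,…,a_p}` is an orthonormal basis of the
(non-degenerate) center `z`, then the Ricci operator restricted to `v`
equals `(1/2) ∑_k ε_k j(a_k)²`, where `ε_k = ⟨a_k,a_k⟩ = ±1`. -/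
theorem ricci_operator_on_v {n : Type*} [LieRing n] [LieAlgebra ℝ n]
    [FiniteDimensional ℝ n]
    (B : LinearMap.BilinForm ℝ n)
    (hsymm : ∀ x y : n, B x y = B y x)
    (hnondeg : ∀ x : n, (∀ y : n, B x y = 0) → x = 0)
    (two_step : ∀ x y w : n, ⁅⁅x, y⁆, w⁆ = 0)
    (z v : Submodule ℝ n)
    (hz : ∀ x : n, x ∈ z ↔ ∀ y : n, ⁅x, y⁆ = 0)
    (hv : ∀ x : n, x ∈ v ↔ ∀ u ∈ z, B x u = 0)
    (hznd : ∀ x ∈ z, (∀ y ∈ z, B x y = 0) → x = 0)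
    (j : n → Module.End ℝ n)
    (hjv : ∀ w ∈ z, ∀ u ∈ v, j w u ∈ v)
    (hjz : ∀ w ∈ z, ∀ x ∈ z, j w x = 0)
    (hjdef : ∀ w ∈ z, ∀ u ∈ v, ∀ u' ∈ v, B (j w u) u' = B w ⁅u, u'⁆)
    (D : n →ₗ[ℝ] n →ₗ[ℝ] n)
    (hDvv : ∀ u ∈ v, ∀ w ∈ v, D u w = (1/2 : ℝ) • ⁅u, w⁆)
    (hDvz : ∀ u ∈ v, ∀ w ∈ z, D u w = -(1/2 : ℝ) • j w u)
    (hDzv : ∀ u ∈ v, ∀ w ∈ z, D w u = -(1/2 : ℝ) • j w u)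
    (hDzz : ∀ u ∈ z, ∀ u' ∈ z, D u u' = 0)
    (Rc : Module.End ℝ n)
    (hRc : ∀ u w : n, B (Rc u) w = ricci D u w)
    (p : ℕ) (a : Fin p → n)
    (haz : ∀ k, a k ∈ z)
    (hspan : Submodule.span ℝ (Set.range a) = z)
    (hortho : ∀ i j, i ≠ j → B (a i) (a j) = 0)
    (hnorm : ∀ k, B (a k) (a k) = 1 ∨ B (a k) (a k) = -1) :
    ∀ x ∈ v, Rc x = (1/2 : ℝ) • ∑ k, B (a k) (a k) • j (a k) (j (a k) x) := by
  classical
  have curv_apply : ∀ u w ξ : n, (curvOp D u w) ξ = D ξ (D u w) - D u (D ξ w) - D ⁅ξ, u⁆ w :=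
    fun _ _ _ => rfl
  have href : B.IsRefl := fun x y h => by rw [hsymm]; exact h
  have hcen : ∀ x y : n, ⁅x, y⁆ ∈ z := fun x y => (hz _).2 fun w => two_step x y w
  have hzv : ∀ u ∈ z, ∀ x ∈ v, B u x = 0 := fun u hu x hx => by
    rw [hsymm]; exact (hv x).1 hx u hu
  have hεne : ∀ k, B (a k) (a k) ≠ 0 := fun k => by
    rcases hnorm k with h | h <;> rw [h] <;> norm_num
  have hεinv : ∀ k, (B (a k) (a k))⁻¹ = B (a k) (a k) := fun k => by
    rcases hnorm k with h | h <;> rw [h] <;> norm_num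
  -- z restriction nondegenerate
  have hzres : (B.restrict z).Nondegenerate := by
    refine ⟨?_, ?_⟩
    · rintro ⟨u, hu⟩ h
      exact Subtype.ext (hznd u hu fun y hy => h ⟨y, hy⟩)
    · rintro ⟨u, hu⟩ h
      exact Subtype.ext (hznd u hu fun y hy => by rw [hsymm]; exact h ⟨y, hy⟩)
  -- v is the orthogonal of z
  have hvorth : v = B.orthogonal z := by
    ext u
    rw [hv, LinearMap.BilinForm.mem_orthogonal_iff]
    constructor
    · intro h m hm; exact href _ _ (h m hm)
    · intro h m hm; exact href _ _ (h m hm)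
  have hcompl : IsCompl v z := by
    rw [hvorth]
    exact (LinearMap.BilinForm.isCompl_orthogonal_of_restrict_nondegenerate href hzres).symm
  have hsup : ∀ y : n, ∃ yv ∈ v, ∃ yz ∈ z, y = yv + yz := by
    intro y
    have hy : y ∈ v ⊔ z := by rw [hcompl.sup_eq_top]; trivial
    obtain ⟨yv, hyv, yz, hyz, h⟩ := Submodule.mem_sup.1 hy
    exact ⟨yv, hyv, yz, hyz, h.symm⟩
  have hvnd : ∀ u ∈ v, (∀ y ∈ v, B u y = 0) → u = 0 := by
    intro u hu h
    apply hnondeg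
    intro y
    obtain ⟨yv, hyv, yz, hyz, rfl⟩ := hsup y
    rw [map_add, h yv hyv, (hv u).1 hu yz hyz, add_zero]
  have hvres : (B.restrict v).Nondegenerate := by
    refine ⟨?_, ?_⟩
    · rintro ⟨u, hu⟩ h
      exact Subtype.ext (hvnd u hu fun y hy => h ⟨y, hy⟩)
    · rintro ⟨u, hu⟩ h
      exact Subtype.ext (hvnd u hu fun y hy => by rw [hsymm]; exact h ⟨y, hy⟩)
  -- a is a basis of z
  have hlia : LinearIndependent ℝ a := by
    rw [Fintype.linearIndependent_iff]
    intro g hg k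
    have h2 : B (∑ i, g i • a i) (a k) = 0 := by rw [hg]; simp
    rw [map_sum, LinearMap.sum_apply, Finset.sum_eq_single k] at h2
    · simp only [map_smul, LinearMap.smul_apply, smul_eq_mul] at h2
      exact (mul_eq_zero.1 h2).resolve_right (hεne k)
    · intro i _ hik
      simp [hortho i k hik]
    · simp
  -- a combined orthogonal basis of n
  haveI : Invertible (2 : ℝ) := invertibleOfNonzero two_ne_zero
  obtain ⟨mm, eb, bv, hebl, hebr, hbvmem, hbvorth, hspanv⟩ :
      ∃ (mm : ℕ) (eb : Basis (Fin mm ⊕ Fin p) ℝ n) (bv : Fin mm → n),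
        (∀ i, eb (Sum.inl i) = bv i) ∧ (∀ k, eb (Sum.inr k) = a k) ∧
        (∀ i, bv i ∈ v) ∧ (∀ i i', i ≠ i' → B (bv i) (bv i') = 0) ∧
        Submodule.span ℝ (Set.range bv) = v := by
    obtain ⟨bb, hbb⟩ := LinearMap.BilinForm.exists_orthogonal_basis
      (B := B.restrict v) ⟨fun x y => hsymm _ _⟩
    let bz : Basis (Fin p) ℝ z :=
      (Basis.span hlia).map (LinearEquiv.ofEq _ _ (by rw [hspan]))
    have hbz : ∀ k, (bz k : n) = a k := by
      intro k
      simp only [bz, Basis.map_apply, LinearEquiv.coe_ofEq_apply]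
      exact congrArg Subtype.val (Module.Basis.span_apply hlia k)
    refine ⟨finrank ℝ v, (bb.prod bz).map (Submodule.prodEquivOfIsCompl v z hcompl),
      fun i => (bb i : n), ?_, ?_, fun i => (bb i).2, ?_, ?_⟩
    · intro i
      have h1 : (bb.prod bz) (Sum.inl i) = (bb i, 0) :=
        Prod.ext (bb.prod_apply_inl_fst bz i) (bb.prod_apply_inl_snd bz i)
      simp [Basis.map_apply, h1, Submodule.coe_prodEquivOfIsCompl']
    · intro k
      have h1 : (bb.prod bz) (Sum.inr k) = (0, bz k) :=
        Prod.ext (bb.prod_apply_inr_fst bz k) (bb.prod_apply_inr_snd bz k)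
      simp [Basis.map_apply, h1, Submodule.coe_prodEquivOfIsCompl', hbz k]
    · intro i i' h
      simpa [Function.onFun, LinearMap.IsOrtho] using hbb h
    · have h1 : Set.range (fun i => ((bb i : n))) = (Submodule.subtype v) '' (Set.range bb) := by
        ext y; simp [Set.range_comp]
      rw [h1, Submodule.span_image, bb.span_eq, Submodule.map_top, Submodule.range_subtype]
  have hbvne : ∀ i, B (bv i) (bv i) ≠ 0 := by
    intro i h
    have h0 : bv i = 0 := by
      apply hvnd (bv i) (hbvmem i)
      intro y hy
      rw [← hspanv, Submodule.mem_span_range_iff_exists_fun] at hy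
      obtain ⟨t, rfl⟩ := hy
      rw [map_sum]
      apply Finset.sum_eq_zero
      intro k _
      rcases eq_or_ne i k with rfl | hik
      · simp [h]
      · simp [hbvorth i k hik]
    have h1 : eb (Sum.inl i) = 0 := by rw [hebl, h0]
    exact eb.ne_zero (Sum.inl i) h1
  have horth : ∀ s t, s ≠ t → B (eb s) (eb t) = 0 := by
    rintro (i | k) (i' | k') hst
    · rw [hebl, hebl]; exact hbvorth i i' (by simpa using hst)
    · rw [hebl, hebr]; exact (hv _).1 (hbvmem i) _ (haz k')
    · rw [hebr, hebl]; exact hzv _ (haz k) _ (hbvmem i')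
    · rw [hebr, hebr]; exact hortho k k' (by simpa using hst)
  have hne : ∀ s, B (eb s) (eb s) ≠ 0 := by
    rintro (i | k)
    · rw [hebl]; exact hbvne i
    · rw [hebr]; exact hεne k
  -- main computations
  intro x hx
  have hjxv : ∀ k, j (a k) x ∈ v := fun k => hjv _ (haz k) x hx
  have ric_z : ∀ w ∈ z, ricci D x w = 0 := by
    intro w hw
    rw [ricci, trace_orthogonal B eb horth hne]
    apply Finset.sum_eq_zero
    rintro (i | k) _
    · rw [hebl i]
      have hmem : (curvOp D x w) (bv i) ∈ z := by
        rw [curv_apply]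
        apply sub_mem (sub_mem ?_ ?_) ?_
        · rw [hDvz x hx w hw, map_smul, hDvv _ (hbvmem i) _ (hjv w hw x hx)]
          exact Submodule.smul_mem _ _ (Submodule.smul_mem _ _ (hcen _ _))
        · rw [hDvz _ (hbvmem i) w hw, map_smul, hDvv x hx _ (hjv w hw _ (hbvmem i))]
          exact Submodule.smul_mem _ _ (Submodule.smul_mem _ _ (hcen _ _))
        · rw [hDzz _ (hcen _ _) _ hw]
          exact Submodule.zero_mem z
      rw [hzv _ hmem _ (hbvmem i), mul_zero]
    · rw [hebr k]
      have hmem : (curvOp D x w) (a k) ∈ v := by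
        rw [curv_apply]
        apply sub_mem (sub_mem ?_ ?_) ?_
        · rw [hDvz x hx w hw, map_smul, hDzv _ (hjv w hw x hx) _ (haz k)]
          exact Submodule.smul_mem _ _ (Submodule.smul_mem _ _ (hjv _ (haz k) _ (hjv w hw x hx)))
        · rw [hDzz _ (haz k) _ hw, map_zero]
          exact Submodule.zero_mem v
        · rw [(hz (a k)).1 (haz k) x, map_zero, LinearMap.zero_apply]
          exact Submodule.zero_mem v
      rw [(hv _).1 hmem _ (haz k), mul_zero]
  have ric_v : ∀ w ∈ v, ricci D x w =
      -(1/2) * ∑ k, B (a k) (a k) * B (j (a k) x) (j (a k) w) := by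
    intro w hw
    rw [ricci, trace_orthogonal B eb horth hne, Fintype.sum_sum_type]
    have hz_entry : ∀ k, (B (eb (Sum.inr k)) (eb (Sum.inr k)))⁻¹ *
        B ((curvOp D x w) (eb (Sum.inr k))) (eb (Sum.inr k)) =
        B (a k) (a k) * ((1/4 : ℝ) * B (j (a k) x) (j (a k) w)) := by
      intro k
      rw [hebr k]
      have hcv : (curvOp D x w) (a k) = (1/4 : ℝ) • ⁅x, j (a k) w⁆ := by
        rw [curv_apply, (hz (a k)).1 (haz k) x, hDvv x hx w hw, map_smul,
          hDzz _ (haz k) _ (hcen x w), hDzv w hw _ (haz k), map_smul,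
          hDvv x hx _ (hjv _ (haz k) w hw), map_zero, LinearMap.zero_apply]
        rw [smul_zero]
        module
      rw [hcv, map_smul, LinearMap.smul_apply, smul_eq_mul,
        hsymm ⁅x, j (a k) w⁆ (a k), ← hjdef _ (haz k) x hx _ (hjv _ (haz k) w hw),
        hεinv k]
    have hv_entry : ∀ i, B ((curvOp D x w) (bv i)) (bv i) =
        -(3/4 : ℝ) * B ⁅x, bv i⁆ ⁅w, bv i⁆ := by
      intro i
      have hcv : (curvOp D x w) (bv i) =
          (-(1/4 : ℝ)) • j ⁅x, w⁆ (bv i) + (1/4 : ℝ) • j ⁅bv i, w⁆ x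
            + (1/2 : ℝ) • j ⁅bv i, x⁆ w := by
        rw [curv_apply, hDvv x hx w hw, map_smul, hDvz _ (hbvmem i) _ (hcen x w),
          hDvv _ (hbvmem i) w hw, map_smul, hDvz x hx _ (hcen _ w),
          hDzv w hw _ (hcen _ x)]
        module
      rw [hcv]
      rw [map_add, map_add, map_smul, map_smul, map_smul, LinearMap.add_apply,
        LinearMap.add_apply, LinearMap.smul_apply, LinearMap.smul_apply,
        LinearMap.smul_apply, smul_eq_mul, smul_eq_mul, smul_eq_mul]
      rw [hjdef _ (hcen x w) _ (hbvmem i) _ (hbvmem i),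
        hjdef _ (hcen (bv i) w) x hx _ (hbvmem i),
        hjdef _ (hcen (bv i) x) w hw _ (hbvmem i)]
      rw [lie_self, map_zero]
      rw [show ⁅bv i, w⁆ = -⁅w, bv i⁆ from (lie_skew (bv i) w).symm,
        show ⁅bv i, x⁆ = -⁅x, bv i⁆ from (lie_skew (bv i) x).symm]
      simp only [map_neg, LinearMap.neg_apply, hsymm ⁅w, bv i⁆ ⁅x, bv i⁆]
      ring
    have hP : ∀ i, B ⁅x, bv i⁆ ⁅w, bv i⁆ =
        ∑ k, B (a k) (a k) * (B (j (a k) x) (bv i) * B (j (a k) w) (bv i)) := by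
      intro i
      rw [expand_orthogonal B a hortho hεne _ _ (by rw [hspan]; exact hcen w (bv i))]
      apply Finset.sum_congr rfl
      intro k _
      rw [hεinv k, hsymm ⁅x, bv i⁆ (a k), hsymm ⁅w, bv i⁆ (a k),
        ← hjdef _ (haz k) x hx _ (hbvmem i), ← hjdef _ (haz k) w hw _ (hbvmem i)]
    have hQ : ∀ k, ∑ i, (B (bv i) (bv i))⁻¹ *
        (B (j (a k) x) (bv i) * B (j (a k) w) (bv i)) =
        B (j (a k) x) (j (a k) w) := by
      intro k
      exact (expand_orthogonal B bv hbvorth hbvne _ _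
        (by rw [hspanv]; exact hjv _ (haz k) w hw)).symm
    calc (∑ i, (B (eb (Sum.inl i)) (eb (Sum.inl i)))⁻¹ *
            B ((curvOp D x w) (eb (Sum.inl i))) (eb (Sum.inl i))) +
          ∑ k, (B (eb (Sum.inr k)) (eb (Sum.inr k)))⁻¹ *
            B ((curvOp D x w) (eb (Sum.inr k))) (eb (Sum.inr k))
        = (∑ i, ∑ k, (-(3/4 : ℝ)) * ((B (bv i) (bv i))⁻¹ *
              (B (a k) (a k) * (B (j (a k) x) (bv i) * B (j (a k) w) (bv i))))) +
          ∑ k, B (a k) (a k) * ((1/4 : ℝ) * B (j (a k) x) (j (a k) w)) := by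
          congr 1
          · apply Finset.sum_congr rfl
            intro i _
            rw [hebl i, hv_entry i, hP i, Finset.mul_sum, Finset.mul_sum]
            apply Finset.sum_congr rfl
            intro k _
            ring
          · exact Finset.sum_congr rfl fun k _ => hz_entry k
      _ = (∑ k, ∑ i, (-(3/4 : ℝ)) * (B (a k) (a k) * ((B (bv i) (bv i))⁻¹ *
              (B (j (a k) x) (bv i) * B (j (a k) w) (bv i))))) +
          ∑ k, B (a k) (a k) * ((1/4 : ℝ) * B (j (a k) x) (j (a k) w)) := by
          rw [Finset.sum_comm]
          congr 1
          apply Finset.sum_congr rfl; intro k _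
          apply Finset.sum_congr rfl; intro i _
          ring
      _ = -(1/2) * ∑ k, B (a k) (a k) * B (j (a k) x) (j (a k) w) := by
          rw [Finset.mul_sum, ← Finset.sum_add_distrib]
          apply Finset.sum_congr rfl
          intro k _
          rw [show (∑ i, (-(3/4 : ℝ)) * (B (a k) (a k) * ((B (bv i) (bv i))⁻¹ *
              (B (j (a k) x) (bv i) * B (j (a k) w) (bv i))))) =
              (-(3/4 : ℝ)) * (B (a k) (a k) * ∑ i, (B (bv i) (bv i))⁻¹ *
              (B (j (a k) x) (bv i) * B (j (a k) w) (bv i))) by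
            rw [Finset.mul_sum, Finset.mul_sum]]
          rw [hQ k]
          ring
  -- assemble
  have hRHSmem : ((1/2 : ℝ) • ∑ k, B (a k) (a k) • j (a k) (j (a k) x)) ∈ v := by
    apply Submodule.smul_mem
    apply Submodule.sum_mem
    intro k _
    exact Submodule.smul_mem _ _ (hjv _ (haz k) _ (hjxv k))
  have key : ∀ y : n, B (Rc x - (1/2 : ℝ) • ∑ k, B (a k) (a k) • j (a k) (j (a k) x)) y = 0 := by
    intro y
    obtain ⟨yv, hyv, yz, hyz, rfl⟩ := hsup y
    rw [map_sub, LinearMap.sub_apply, map_add, map_add]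
    have h1 : B (Rc x) yz = 0 := by rw [hRc, ric_z yz hyz]
    have h2 : B ((1/2 : ℝ) • ∑ k, B (a k) (a k) • j (a k) (j (a k) x)) yz = 0 :=
      (hv _).1 hRHSmem _ hyz
    have h3 : B (Rc x) yv = -(1/2) * ∑ k, B (a k) (a k) * B (j (a k) x) (j (a k) yv) := by
      rw [hRc, ric_v yv hyv]
    have h4 : B ((1/2 : ℝ) • ∑ k, B (a k) (a k) • j (a k) (j (a k) x)) yv =
        -(1/2) * ∑ k, B (a k) (a k) * B (j (a k) x) (j (a k) yv) := by
      rw [map_smul, map_sum]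
      simp only [LinearMap.smul_apply, LinearMap.sum_apply, smul_eq_mul, map_smul]
      rw [Finset.mul_sum]
      rw [show (-(1/2) : ℝ) * ∑ k, B (a k) (a k) * B (j (a k) x) (j (a k) yv) =
          ∑ k, (-(1/2) : ℝ) * (B (a k) (a k) * B (j (a k) x) (j (a k) yv)) from
        Finset.mul_sum _ _ _]
      apply Finset.sum_congr rfl
      intro k _
      have h5 : B (j (a k) (j (a k) x)) yv = - B (j (a k) x) (j (a k) yv) := by
        rw [hjdef _ (haz k) _ (hjxv k) yv hyv,
          show ⁅j (a k) x, yv⁆ = -⁅yv, j (a k) x⁆ from (lie_skew (j (a k) x) yv).symm,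
          map_neg, ← hjdef _ (haz k) yv hyv _ (hjxv k), hsymm]
      rw [h5]
      ring
    rw [h1, h2, h3, h4]
    ring
  have := hnondeg _ key
  rwa [sub_eq_zero] at this
end

section
/- For the Lorentzian Heisenberg algebra h₃ with -⟨e₁,e₁⟩ = ⟨e₂,e₂⟩ = ⟨e₃,e₃⟩ = 1 and [e₁,e₂] = e₃, the Ricci operator satisfies Rc = (1/2)Id on v = span{e₁,e₂} and Rc(e₃) = -(1/2)e₃, and the scalar curvature equals 1/2 (in particular positive). -/
/-- For the Lorentzian Heisenberg algebra `h₃` with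
`-⟨e₁,e₁⟩ = ⟨e₂,e₂⟩ = ⟨e₃,e₃⟩ = 1` and `⁅e₁,e₂⁆ = e₃`, the Ricci operator
satisfies `Rc = (1/2)Id` on `v = span{e₁,e₂}` and `Rc e₃ = -(1/2)e₃`, and the
scalar curvature equals `1/2`, in particular it is positive. -/
theorem lorentz_heisenberg_ricci {h : Type*} [LieRing h] [LieAlgebra ℝ h]
    [FiniteDimensional ℝ h]
    (e₁ e₂ e₃ : h)
    (hbasis : ∃ b : Module.Basis (Fin 3) ℝ h, b 0 = e₁ ∧ b 1 = e₂ ∧ b 2 = e₃)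
    (h12 : ⁅e₁, e₂⁆ = e₃) (h13 : ⁅e₁, e₃⁆ = 0) (h23 : ⁅e₂, e₃⁆ = 0)
    (B : LinearMap.BilinForm ℝ h)
    (hsymm : ∀ x y : h, B x y = B y x)
    (hB11 : B e₁ e₁ = -1) (hB22 : B e₂ e₂ = 1) (hB33 : B e₃ e₃ = 1)
    (hB12 : B e₁ e₂ = 0) (hB13 : B e₁ e₃ = 0) (hB23 : B e₂ e₃ = 0)
    (v : Submodule ℝ h) (hv : v = Submodule.span ℝ {e₁, e₂})
    -- `j = j(e₃)`, defined on `v` by `⟨j(e₃)x, y⟩ = ⟨e₃, ⁅x,y⁆⟩`, zero on the center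
    (j : Module.End ℝ h)
    (hjv : ∀ x ∈ v, j x ∈ v)
    (hjdef : ∀ x ∈ v, ∀ y ∈ v, B (j x) y = B e₃ ⁅x, y⁆)
    (hj3 : j e₃ = 0)
    -- the Ricci operator: `Rc|_v = (1/2) ε j(e₃)²` for the orthonormal basis `{e₃}`
    -- of the center (`ε = ⟨e₃,e₃⟩ = 1`), and `Ric(e₃,e₃) = -(1/4) trace(j(e₃)²)`
    (Rc : Module.End ℝ h)
    (hRcv : ∀ x ∈ v, Rc x = (1/2 : ℝ) • (B e₃ e₃) • j (j x))
    (hRczmem : Rc e₃ ∈ Submodule.span ℝ {e₃})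
    (hRic : B (Rc e₃) e₃ = -(1/4 : ℝ) * LinearMap.trace ℝ h (j ∘ₗ j)) :
    (∀ x ∈ v, Rc x = (1/2 : ℝ) • x) ∧
    Rc e₃ = -(1/2 : ℝ) • e₃ ∧
    LinearMap.trace ℝ h Rc = 1/2 ∧
    0 < LinearMap.trace ℝ h Rc := by
  obtain ⟨b, hb0, hb1, hb2⟩ := hbasis
  have he₁v : e₁ ∈ v := by rw [hv]; exact Submodule.subset_span (by simp)
  have he₂v : e₂ ∈ v := by rw [hv]; exact Submodule.subset_span (by simp)
  -- nondegeneracy on v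
  have hzero : ∀ w ∈ v, B w e₁ = 0 → B w e₂ = 0 → w = 0 := by
    intro w hw h1 h2
    rw [hv, Submodule.mem_span_pair] at hw
    obtain ⟨a, c, rfl⟩ := hw
    simp only [map_add, map_smul, LinearMap.add_apply, LinearMap.smul_apply,
      smul_eq_mul, hB11, hB12, hsymm e₂ e₁ ▸ hB12, hB22] at h1 h2
    have ha : a = 0 := by linarith
    have hc : c = 0 := by linarith
    simp [ha, hc]
  have hje₁ : j e₁ = e₂ := by
    have hmem : j e₁ - e₂ ∈ v := Submodule.sub_mem v (hjv e₁ he₁v) he₂v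
    have h1 : B (j e₁ - e₂) e₁ = 0 := by
      rw [map_sub, LinearMap.sub_apply, hjdef e₁ he₁v e₁ he₁v, lie_self,
        hsymm e₂ e₁, hB12]
      simp
    have h2 : B (j e₁ - e₂) e₂ = 0 := by
      rw [map_sub, LinearMap.sub_apply, hjdef e₁ he₁v e₂ he₂v, h12, hB33, hB22]
      ring
    exact sub_eq_zero.mp (hzero _ hmem h1 h2)
  have hje₂ : j e₂ = e₁ := by
    have hmem : j e₂ - e₁ ∈ v := Submodule.sub_mem v (hjv e₂ he₂v) he₁v
    have h1 : B (j e₂ - e₁) e₁ = 0 := by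
      rw [map_sub, LinearMap.sub_apply, hjdef e₂ he₂v e₁ he₁v, ← lie_skew, h12,
        map_neg, hB33, hB11]
      ring
    have h2 : B (j e₂ - e₁) e₂ = 0 := by
      rw [map_sub, LinearMap.sub_apply, hjdef e₂ he₂v e₂ he₂v, lie_self, hB12]
      simp
    exact sub_eq_zero.mp (hzero _ hmem h1 h2)
  -- j² = id on v
  have hRcx : ∀ x ∈ v, Rc x = (1/2 : ℝ) • x := by
    intro x hx
    have hx' := hx
    rw [hv, Submodule.mem_span_pair] at hx'
    obtain ⟨a, c, rfl⟩ := hx'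
    rw [hRcv _ hx, hB33]
    simp [map_add, map_smul, hje₁, hje₂]
  -- trace of j²
  have htr : LinearMap.trace ℝ h (j ∘ₗ j) = 2 := by
    rw [LinearMap.trace_eq_matrix_trace ℝ b, Matrix.trace, Fin.sum_univ_three]
    simp only [Matrix.diag, LinearMap.toMatrix_apply, LinearMap.comp_apply,
      hb0, hb1, hb2, hje₁, hje₂, hj3, map_zero]
    rw [← hb0, ← hb1]
    simp
    norm_num
  have hRc3 : Rc e₃ = -(1/2 : ℝ) • e₃ := by
    rw [Submodule.mem_span_singleton] at hRczmem
    obtain ⟨t, ht⟩ := hRczmem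
    rw [← ht]
    rw [← ht, htr] at hRic
    simp only [map_smul, LinearMap.smul_apply, smul_eq_mul, hB33, mul_one] at hRic
    rw [hRic]; norm_num
  have htrRc : LinearMap.trace ℝ h Rc = 1/2 := by
    rw [LinearMap.trace_eq_matrix_trace ℝ b, Matrix.trace, Fin.sum_univ_three]
    simp only [Matrix.diag, LinearMap.toMatrix_apply, hb0, hb1, hb2,
      hRcx e₁ he₁v, hRcx e₂ he₂v, hRc3]
    rw [← hb0, ← hb1, ← hb2]
    simp
    try norm_num
  exact ⟨hRcx, hRc3, htrRc, by rw [htrRc]; norm_num⟩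
end

section
/- Let n be a 2-step nilpotent Lie algebra admitting an ad-invariant non-degenerate symmetric bilinear form ⟨,⟩. If n is non-abelian, then the restriction of ⟨,⟩ to the center of n is degenerate; equivalently, the center contains a nonzero vector orthogonal to the whole center. -/
/-- If a non-abelian 2-step nilpotent Lie algebra admits an
ad-invariant non-degenerate symmetric bilinear form, then the restriction of
the form to the center is degenerate: there is a nonzero central vector
orthogonal to the whole center. -/
theorem biinvariant_metric_degenerate_center {n : Type*} [LieRing n] [LieAlgebra ℝ n]
    (two_step : ∀ x y w : n, ⁅⁅x, y⁆, w⁆ = 0)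
    (nonabelian : ∃ x y : n, ⁅x, y⁆ ≠ 0)
    (B : LinearMap.BilinForm ℝ n)
    (hsymm : ∀ x y : n, B x y = B y x)
    (hnondeg : ∀ x : n, (∀ y : n, B x y = 0) → x = 0)
    (hadinv : ∀ x y w : n, B ⁅x, y⁆ w + B y ⁅x, w⁆ = 0) :
    ∃ x : n, x ≠ 0 ∧ (∀ y : n, ⁅x, y⁆ = 0) ∧
      ∀ u : n, (∀ y : n, ⁅u, y⁆ = 0) → B x u = 0 := by
  obtain ⟨a, b, hab⟩ := nonabelian
  refine ⟨⁅a, b⁆, hab, fun y => two_step a b y, fun u hu => ?_⟩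
  have h := hadinv a b u
  have hau : ⁅a, u⁆ = 0 := by
    have := hu a
    rw [← lie_skew] at this
    simpa using neg_eq_zero.mp (by rw [lie_skew]; simpa using this)
  rw [hau] at h
  simpa using h
end

section
/- In the Lie algebra iso = span{f₀,f₁,f₂,e₀,e₁,e₂,e₃} with nonzero brackets [f₀,f₁]=f₂, [f₀,f₂]=-f₁, [f₀,e₁]=e₂, [f₀,e₂]=-e₁, [e₀,e₁]=e₂, [e₀,e₂]=-e₁, [f₁,e₂]=e₃, [f₂,e₁]=-e₃, [e₁,e₂]=e₃, the nilradical (the maximal nilpotent ideal) is span{f₁,f₂,e₁,e₂,e₃}, and it does not contain the subalgebra span{f₀-e₀, e₁, e₂, e₃}. -/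
lemma iso_aux_nilp {L : Type*} [LieRing L] [LieAlgebra ℝ L]
    (I : LieIdeal ℝ L) (hI : LieRing.IsNilpotent I) {x y : L}
    (hx : x ∈ I) (hy : y ∈ I) :
    ∃ k, ((fun z => ⁅x, z⁆) : L → L)^[k] y = 0 := by
  obtain ⟨k, hk⟩ := LieModule.IsNilpotent.nilpotent ℝ I I
  refine ⟨k, ?_⟩
  have key : ∀ j, ((fun z => ⁅x, z⁆) : L → L)^[j] y =
      (((LieModule.toEnd ℝ I I ⟨x, hx⟩)^[j] ⟨y, hy⟩ : I) : L) := by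
    intro j
    induction j with
    | zero => rfl
    | succ j ih =>
      rw [Function.iterate_succ_apply', Function.iterate_succ_apply', ih]
      simp [LieModule.toEnd_apply_apply]
  rw [key k]
  have := LieModule.iterate_toEnd_mem_lowerCentralSeries ℝ I I ⟨x, hx⟩ ⟨y, hy⟩ k
  rw [hk] at this
  simpa using this

/-- In the 7-dimensional Lie algebra `iso` spanned by
`f₀,f₁,f₂,e₀,e₁,e₂,e₃` with the stated brackets, the nilradical (the maximal
nilpotent ideal) is `span{f₁,f₂,e₁,e₂,e₃}`, and it does not contain the
subalgebra `span{f₀-e₀, e₁, e₂, e₃}`. -/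
theorem nilradical_of_iso {L : Type*} [LieRing L] [LieAlgebra ℝ L]
    (f₀ f₁ f₂ e₀ e₁ e₂ e₃ : L)
    (b : Module.Basis (Fin 7) ℝ L)
    (hb : b 0 = f₀ ∧ b 1 = f₁ ∧ b 2 = f₂ ∧ b 3 = e₀ ∧ b 4 = e₁ ∧ b 5 = e₂ ∧
      b 6 = e₃)
    -- non-trivial brackets
    (h1 : ⁅f₀, f₁⁆ = f₂) (h2 : ⁅f₀, f₂⁆ = -f₁) (h3 : ⁅f₀, e₁⁆ = e₂)
    (h4 : ⁅f₀, e₂⁆ = -e₁) (h5 : ⁅e₀, e₁⁆ = e₂) (h6 : ⁅e₀, e₂⁆ = -e₁)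
    (h7 : ⁅f₁, e₂⁆ = e₃) (h8 : ⁅f₂, e₁⁆ = -e₃) (h9 : ⁅e₁, e₂⁆ = e₃)
    -- all the remaining brackets of basis vectors vanish
    (z1 : ⁅f₀, e₀⁆ = 0) (z2 : ⁅f₀, e₃⁆ = 0) (z3 : ⁅f₁, f₂⁆ = 0)
    (z4 : ⁅f₁, e₀⁆ = 0) (z5 : ⁅f₁, e₁⁆ = 0) (z6 : ⁅f₁, e₃⁆ = 0)
    (z7 : ⁅f₂, e₀⁆ = 0) (z8 : ⁅f₂, e₂⁆ = 0) (z9 : ⁅f₂, e₃⁆ = 0)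
    (z10 : ⁅e₀, e₃⁆ = 0) (z11 : ⁅e₁, e₃⁆ = 0) (z12 : ⁅e₂, e₃⁆ = 0) :
    -- `N = span{f₁,f₂,e₁,e₂,e₃}` is an ideal
    (∀ x ∈ Submodule.span ℝ ({f₁, f₂, e₁, e₂, e₃} : Set L), ∀ y : L,
      ⁅y, x⁆ ∈ Submodule.span ℝ ({f₁, f₂, e₁, e₂, e₃} : Set L)) ∧
    -- `N` is (2-step) nilpotent
    (∀ x ∈ Submodule.span ℝ ({f₁, f₂, e₁, e₂, e₃} : Set L),
      ∀ y ∈ Submodule.span ℝ ({f₁, f₂, e₁, e₂, e₃} : Set L),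
      ∀ w ∈ Submodule.span ℝ ({f₁, f₂, e₁, e₂, e₃} : Set L), ⁅⁅x, y⁆, w⁆ = 0) ∧
    -- `N` is maximal: it contains every nilpotent ideal
    (∀ I : LieIdeal ℝ L, LieRing.IsNilpotent I →
      (I : Submodule ℝ L) ≤ Submodule.span ℝ ({f₁, f₂, e₁, e₂, e₃} : Set L)) ∧
    -- `N` does not contain the subalgebra `n = span{f₀-e₀, e₁, e₂, e₃}`
    ¬ (Submodule.span ℝ ({f₀ - e₀, e₁, e₂, e₃} : Set L) ≤
        Submodule.span ℝ ({f₁, f₂, e₁, e₂, e₃} : Set L)) := by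
  obtain ⟨hb0, hb1, hb2, hb3, hb4, hb5, hb6⟩ := hb
  set N := Submodule.span ℝ ({f₁, f₂, e₁, e₂, e₃} : Set L) with hN
  -- reversed brackets
  have r1 : ⁅f₁, f₀⁆ = -f₂ := by rw [← lie_skew, h1]
  have r2 : ⁅f₂, f₀⁆ = f₁ := by rw [← lie_skew, h2, neg_neg]
  have r3 : ⁅e₁, f₀⁆ = -e₂ := by rw [← lie_skew, h3]
  have r4 : ⁅e₂, f₀⁆ = e₁ := by rw [← lie_skew, h4, neg_neg]
  have r5 : ⁅e₁, e₀⁆ = -e₂ := by rw [← lie_skew, h5]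
  have r6 : ⁅e₂, e₀⁆ = e₁ := by rw [← lie_skew, h6, neg_neg]
  have r7 : ⁅e₂, f₁⁆ = -e₃ := by rw [← lie_skew, h7]
  have r8 : ⁅e₁, f₂⁆ = e₃ := by rw [← lie_skew, h8, neg_neg]
  have r9 : ⁅e₂, e₁⁆ = -e₃ := by rw [← lie_skew, h9]
  have w1 : ⁅e₀, f₀⁆ = 0 := by rw [← lie_skew, z1, neg_zero]
  have w2 : ⁅e₃, f₀⁆ = 0 := by rw [← lie_skew, z2, neg_zero]
  have w3 : ⁅f₂, f₁⁆ = 0 := by rw [← lie_skew, z3, neg_zero]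
  have w4 : ⁅e₀, f₁⁆ = 0 := by rw [← lie_skew, z4, neg_zero]
  have w5 : ⁅e₁, f₁⁆ = 0 := by rw [← lie_skew, z5, neg_zero]
  have w6 : ⁅e₃, f₁⁆ = 0 := by rw [← lie_skew, z6, neg_zero]
  have w7 : ⁅e₀, f₂⁆ = 0 := by rw [← lie_skew, z7, neg_zero]
  have w8 : ⁅e₂, f₂⁆ = 0 := by rw [← lie_skew, z8, neg_zero]
  have w9 : ⁅e₃, f₂⁆ = 0 := by rw [← lie_skew, z9, neg_zero]
  have w10 : ⁅e₃, e₀⁆ = 0 := by rw [← lie_skew, z10, neg_zero]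
  have w11 : ⁅e₃, e₁⁆ = 0 := by rw [← lie_skew, z11, neg_zero]
  have w12 : ⁅e₃, e₂⁆ = 0 := by rw [← lie_skew, z12, neg_zero]
  -- decomposition in the basis
  have hdecomp : ∀ y : L, y = b.repr y 0 • f₀ + b.repr y 1 • f₁ + b.repr y 2 • f₂ +
      b.repr y 3 • e₀ + b.repr y 4 • e₁ + b.repr y 5 • e₂ + b.repr y 6 • e₃ := by
    intro y
    have h := b.sum_repr y
    rw [Fin.sum_univ_seven, hb0, hb1, hb2, hb3, hb4, hb5, hb6] at h
    exact h.symm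
  -- membership in N from explicit combinations
  have hmem : ∀ c1 c2 c4 c5 c6 : ℝ,
      c1 • f₁ + c2 • f₂ + c4 • e₁ + c5 • e₂ + c6 • e₃ ∈ N := by
    intro c1 c2 c4 c5 c6
    refine Submodule.add_mem _ (Submodule.add_mem _ (Submodule.add_mem _
      (Submodule.add_mem _ ?_ ?_) ?_) ?_) ?_ <;>
      exact Submodule.smul_mem _ _ (Submodule.subset_span (by simp))
  -- coordinates 0 and 3 of elements of N vanish
  have hNrepr : ∀ v ∈ N, b.repr v 0 = 0 ∧ b.repr v 3 = 0 := by
    intro v hv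
    induction hv using Submodule.span_induction with
    | mem g hg =>
      rcases hg with rfl | rfl | rfl | rfl | rfl <;>
        constructor <;>
        simp [← hb1, ← hb2, ← hb4, ← hb5, ← hb6, Module.Basis.repr_self,
          Finsupp.single_apply]
    | zero => simp
    | add u v hu hv ihu ihv => simp [ihu.1, ihu.2, ihv.1, ihv.2]
    | smul t u hu ihu => simp [ihu.1, ihu.2]
  have hNmem : ∀ v : L, b.repr v 0 = 0 → b.repr v 3 = 0 → v ∈ N := by
    intro v h0 h3
    have hv := hdecomp v
    rw [h0, h3] at hv
    rw [hv]
    simpa using hmem (b.repr v 1) (b.repr v 2) (b.repr v 4) (b.repr v 5) (b.repr v 6)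
  -- every bracket lies in N
  have hcent : ∀ v : L, ⁅e₃, v⁆ = 0 := by
    intro v
    rw [hdecomp v]
    simp only [lie_add, lie_smul, w2, w6, w9, w10, w11, w12, lie_self, smul_zero,
      add_zero]
  have hbrN : ∀ u w : L, ⁅u, w⁆ ∈ N := by
    intro u w
    rw [hdecomp u, hdecomp w]
    simp only [lie_add, add_lie, lie_smul, smul_lie, h1, h2, h3, h4, h5, h6, h7, h8,
      h9, z1, z2, z3, z4, z5, z6, z7, z8, z9, z10, z11, z12, r1, r2, r3, r4, r5, r6,
      r7, r8, r9, w1, w2, w3, w4, w5, w6, w7, w8, w9, w10, w11, w12, lie_self,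
      smul_zero, add_zero, zero_add, smul_neg]
    repeat
      first
      | exact Submodule.zero_mem _
      | apply Submodule.add_mem
      | apply Submodule.neg_mem
      | apply Submodule.smul_mem
      | exact Submodule.subset_span (by simp)
  refine ⟨fun x _ y => hbrN y x, ?_, ?_, ?_⟩
  · -- nilpotency
    intro x hx y hy w hw
    obtain ⟨hx0, hx3⟩ := hNrepr x hx
    obtain ⟨hy0, hy3⟩ := hNrepr y hy
    obtain ⟨hw0, hw3⟩ := hNrepr w hw
    have hx' := hdecomp x; rw [hx0, hx3] at hx'
    have hy' := hdecomp y; rw [hy0, hy3] at hy'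
    rw [hx', hy']
    simp only [zero_smul, zero_add, add_zero, lie_add, add_lie, lie_smul, smul_lie,
      h7, h8, h9, z3, z5, z6, z8, z9, z11, z12, r7, r8, r9, w3, w5, w6, w8, w9, w11,
      w12, lie_self, smul_zero, smul_neg, neg_zero, lie_zero, zero_lie, neg_lie,
      hcent, neg_smul]
  · -- maximality
    intro I hI x hx'
    have hx : x ∈ I := hx'
    clear hx'
    have hxd := hdecomp x
    set a := b.repr x 0 with ha
    set d := b.repr x 3 with hd
    set c1 := b.repr x 1
    set c2 := b.repr x 2
    set c4 := b.repr x 4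
    set c5 := b.repr x 5
    -- bracket formula on span{f₁,f₂,e₃}
    have habr : ∀ α β γ : ℝ, ⁅x, α • f₁ + β • f₂ + γ • e₃⁆ =
        (-(a*β)) • f₁ + (a*α) • f₂ + (c4*β - c5*α) • e₃ := by
      intro α β γ
      conv_lhs => rw [hxd]
      simp only [lie_add, add_lie, lie_smul, smul_lie, h1, h2, z2, z3, z6, z9, r8,
        w4, w5, w6, w7, w8, w9, r7, z5, z10, lie_self, smul_zero, smul_neg, add_zero,
        zero_add, w11, w12, z11, z12, w3]
      module
    -- bracket formula on span{e₁,e₂,e₃}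
    have habr' : ∀ α β γ : ℝ, ⁅x, α • e₁ + β • e₂ + γ • e₃⁆ =
        (-((a+d)*β)) • e₁ + ((a+d)*α) • e₂ + ((c1+c4)*β - (c2+c5)*α) • e₃ := by
      intro α β γ
      conv_lhs => rw [hxd]
      simp only [lie_add, add_lie, lie_smul, smul_lie, h3, h4, h5, h6, h7, h8, h9,
        z2, z5, z6, z8, z9, z10, z11, z12, r9, lie_self, smul_zero, smul_neg,
        add_zero, zero_add, w11, w12]
      module
    -- a = 0
    have ha0 : a = 0 := by
      have hy₀ : ⁅x, f₁⁆ ∈ I := lie_mem_left ℝ L I x f₁ hx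
      obtain ⟨k, hk⟩ := iso_aux_nilp I hI hx hy₀
      have iter : ∀ j : ℕ, ∃ α β γ : ℝ,
          ((fun z => ⁅x, z⁆) : L → L)^[j] ⁅x, f₁⁆ = α • f₁ + β • f₂ + γ • e₃ ∧
          α ^ 2 + β ^ 2 = (a ^ 2) ^ (j + 1) := by
        intro j
        induction j with
        | zero =>
          refine ⟨0, a, -c5, ?_, by ring⟩
          have h := habr 1 0 0
          simp only [Function.iterate_zero, id_eq]
          rw [show (f₁ : L) = (1:ℝ) • f₁ + (0:ℝ) • f₂ + (0:ℝ) • e₃ by module, h]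
          module
        | succ j ih =>
          obtain ⟨α, β, γ, heq, hn⟩ := ih
          refine ⟨-(a*β), a*α, c4*β - c5*α, ?_, ?_⟩
          · rw [Function.iterate_succ_apply', heq, habr]
          · rw [show (-(a*β))^2 + (a*α)^2 = a^2 * (α^2 + β^2) by ring, hn]
            ring
      obtain ⟨α, β, γ, heq, hn⟩ := iter k
      rw [hk] at heq
      have hβ : β = 0 := by
        have h2' := congrArg (fun v => b.repr v 2) heq.symm
        simpa [← hb1, ← hb2, ← hb6, Module.Basis.repr_self, Finsupp.single_apply] using h2'
      have hα : α = 0 := by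
        have h1' := congrArg (fun v => b.repr v 1) heq.symm
        simpa [← hb1, ← hb2, ← hb6, Module.Basis.repr_self, Finsupp.single_apply] using h1'
      rw [hα, hβ] at hn
      have : (a ^ 2) ^ (k + 1) = 0 := by linarith [hn]
      have := pow_eq_zero_iff (n := k + 1) (by omega) |>.mp this
      exact pow_eq_zero_iff (n := 2) (by omega) |>.mp this
    -- a + d = 0
    have had : a + d = 0 := by
      have hy₀ : ⁅x, e₁⁆ ∈ I := lie_mem_left ℝ L I x e₁ hx
      obtain ⟨k, hk⟩ := iso_aux_nilp I hI hx hy₀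
      have iter : ∀ j : ℕ, ∃ α β γ : ℝ,
          ((fun z => ⁅x, z⁆) : L → L)^[j] ⁅x, e₁⁆ = α • e₁ + β • e₂ + γ • e₃ ∧
          α ^ 2 + β ^ 2 = ((a + d) ^ 2) ^ (j + 1) := by
        intro j
        induction j with
        | zero =>
          refine ⟨0, a + d, -(c2+c5), ?_, by ring⟩
          have h := habr' 1 0 0
          simp only [Function.iterate_zero, id_eq]
          rw [show (e₁ : L) = (1:ℝ) • e₁ + (0:ℝ) • e₂ + (0:ℝ) • e₃ by module, h]
          module
        | succ j ih =>
          obtain ⟨α, β, γ, heq, hn⟩ := ih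
          refine ⟨-((a+d)*β), (a+d)*α, (c1+c4)*β - (c2+c5)*α, ?_, ?_⟩
          · rw [Function.iterate_succ_apply', heq, habr']
          · rw [show (-((a+d)*β))^2 + ((a+d)*α)^2 = (a+d)^2 * (α^2 + β^2) by ring, hn]
            ring
      obtain ⟨α, β, γ, heq, hn⟩ := iter k
      rw [hk] at heq
      have hβ : β = 0 := by
        have h2' := congrArg (fun v => b.repr v 5) heq.symm
        simpa [← hb4, ← hb5, ← hb6, Module.Basis.repr_self, Finsupp.single_apply] using h2'
      have hα : α = 0 := by
        have h1' := congrArg (fun v => b.repr v 4) heq.symm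
        simpa [← hb4, ← hb5, ← hb6, Module.Basis.repr_self, Finsupp.single_apply] using h1'
      rw [hα, hβ] at hn
      have : ((a + d) ^ 2) ^ (k + 1) = 0 := by linarith [hn]
      have := pow_eq_zero_iff (n := k + 1) (by omega) |>.mp this
      exact pow_eq_zero_iff (n := 2) (by omega) |>.mp this
    have hd0 : d = 0 := by linarith
    exact hNmem x (by rw [← ha, ha0]) (by rw [← hd, hd0])
  · -- n is not contained in N
    intro hle
    have h1' : f₀ - e₀ ∈ N := hle (Submodule.subset_span (by simp))
    have h0 := (hNrepr _ h1').1
    rw [map_sub] at h0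
    simp only [← hb0, ← hb3, Module.Basis.repr_self] at h0
    simp [Finsupp.single_apply] at h0
end
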